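/- arXiv:1506.06515 — 2 statements merged into one kernel-verified Lean document; each statement's English description precedes it below -/
import Mathlib

section
/- Let 𝒢 be a sequence of covers with inverse limit (X,f). Suppose nonnegative real numbers μ(U(e)) are assigned to all e ∈ E_n, n ∈ ℕ, such that: (i) for every n ∈ ℕ and v ∈ V_n, Σ_{e∈E_n with terminal vertex v} μ(U(e)) = Σ_{e∈E_n with initial vertex v} μ(U(e)); and (ii) for all m > n and every e ∈ E_n, Σ_{e′∈E_m with φ_{m,n}(e′)=e} μ(U(e′)) = μ(U(e)). Then there exists an f-invariant Borel measure μ on X with μ(U(e)) equal to the assigned value for every e ∈ E_n and every n ∈ ℕ. -/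
open Filter Topology MeasureTheory

/-- A (directed) graph on a vertex set `V`: an edge relation `E ⊆ V × V`
whose two coordinate projections are surjective. -/
structure DirGraph (V : Type) : Type where
  E : Set (V × V)
  surj_init : ∀ v : V, ∃ u : V, (v, u) ∈ E
  surj_term : ∀ v : V, ∃ u : V, (u, v) ∈ E

/-- A walk of length `l` in `G`. -/
def IsWalk {V : Type} (G : DirGraph V) (l : ℕ) (w : Fin (l + 1) → V) : Prop :=
  ∀ i : Fin l, (w i.castSucc, w i.succ) ∈ G.E

/-- The edge set of a walk. -/
def walkEdges {V : Type} {l : ℕ} (w : Fin (l + 1) → V) : Set (V × V) :=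
  {e | ∃ i : Fin l, e = (w i.castSucc, w i.succ)}

/-- `c` is the edge set of a circuit of `G`: a closed walk whose vertices are
pairwise distinct except that the initial and terminal vertices coincide. -/
def IsCircuitIn {V : Type} (G : DirGraph V) (c : Set (V × V)) : Prop :=
  ∃ l : ℕ, 0 < l ∧ ∃ w : Fin (l + 1) → V,
    IsWalk G l w ∧ w (Fin.last l) = w 0 ∧
    (∀ i j : Fin (l + 1), i < j → w i = w j → i = 0 ∧ j = Fin.last l) ∧
    c = walkEdges w

/-- The set `𝒞(G)` of circuit graphs of `G` (a circuit graph is identified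
with its edge set). -/
def circuitsOf {V : Type} (G : DirGraph V) : Set (Set (V × V)) :=
  {c | IsCircuitIn G c}

/-- The vertex set of a circuit graph (given by its edge set). -/
def circVerts {V : Type} (c : Set (V × V)) : Set V :=
  {v | ∃ e ∈ c, v = e.1 ∨ v = e.2}

/-- The element `Σ_{e ∈ E(c)} e` of the vector space with basis the edges,
associated with a circuit graph `c`. -/
noncomputable def circVec {V : Type} (c : Set (V × V)) : V × V → ℝ :=
  c.indicator fun _ => 1

/-- `c̃ = (1/Per(c))·c` where `Per(c)` is the number of edges of `c`. -/
noncomputable def circTilde {V : Type} (c : Set (V × V)) : V × V → ℝ :=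
  fun e => ((Set.ncard c : ℝ))⁻¹ * circVec c e

/-- Membership in `ℳ(G)`: nonnegative coefficients supported on the edges. -/
def MemM {V : Type} [Fintype V] (G : DirGraph V) (a : V × V → ℝ) : Prop :=
  (∀ e, 0 ≤ a e) ∧ ∀ e, e ∉ G.E → a e = 0

/-- Membership in `ℐ(G)`: at every vertex the incoming coefficient sum equals
the outgoing coefficient sum. -/
def MemI {V : Type} [Fintype V] (G : DirGraph V) (a : V × V → ℝ) : Prop :=
  MemM G a ∧ ∀ v : V, (∑ u : V, a (u, v)) = ∑ u : V, a (v, u)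

/-- Membership in `𝒫(G)`: elements of `ℐ(G)` of total mass `1`. -/
def MemP {V : Type} [Fintype V] (G : DirGraph V) (a : V × V → ℝ) : Prop :=
  MemI G a ∧ (∑ e : V × V, a e) = 1

/-- The action of a map on edges. -/
def edgeMap {V₁ V₂ : Type} (ψ : V₁ → V₂) (e : V₁ × V₁) : V₂ × V₂ := (ψ e.1, ψ e.2)

/-- `ψ : G₁ → G₂` is a cover: an edge-surjective, positive-directional
graph homomorphism. -/
structure IsCover {V₁ V₂ : Type} (G₁ : DirGraph V₁) (G₂ : DirGraph V₂) (ψ : V₁ → V₂) : Prop where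
  hom : ∀ u v : V₁, (u, v) ∈ G₁.E → (ψ u, ψ v) ∈ G₂.E
  edgeSurj : ∀ e ∈ G₂.E, ∃ u v : V₁, (u, v) ∈ G₁.E ∧ (ψ u, ψ v) = e
  posDir : ∀ u v v' : V₁, (u, v) ∈ G₁.E → (u, v') ∈ G₁.E → ψ v = ψ v'

/-- The induced linear map `ψ_*` on edge vectors: the coefficient of an edge `e`
of the target is the sum of the coefficients of its preimages. -/
noncomputable def pushVec {V₁ V₂ : Type} (ψ : V₁ → V₂) (a : V₁ × V₁ → ℝ) : V₂ × V₂ → ℝ :=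
  fun e => ∑ᶠ e' ∈ {e' : V₁ × V₁ | edgeMap ψ e' = e}, a e'

/-- Euclidean distance on finite-dimensional coordinate spaces. -/
noncomputable def dE {ι : Type} [Fintype ι] (a b : ι → ℝ) : ℝ :=
  Real.sqrt (∑ i : ι, (a i - b i) ^ 2)

/-- A sequence of covers `G₀ ← G₁ ← G₂ ← ⋯` of finite graphs, with `G₀`
the one-vertex graph (with a single loop). -/
structure CoverSystem : Type 1 where
  V : ℕ → Type
  fintypeV : ∀ n, Fintype (V n)
  G : ∀ n, DirGraph (V n)
  φ : ∀ n, V (n + 1) → V n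
  cover : ∀ n, IsCover (G (n + 1)) (G n) (φ n)
  V0_single : ∀ x y : V 0, x = y

namespace CoverSystem

instance (S : CoverSystem) (n : ℕ) : Fintype (S.V n) := S.fintypeV n
instance (S : CoverSystem) (n : ℕ) : TopologicalSpace (S.V n) := ⊥
instance (S : CoverSystem) (n : ℕ) : DiscreteTopology (S.V n) := ⟨rfl⟩

/-- `φ_{n+k, n}` as a composition of the covering maps. -/
def phiIter (S : CoverSystem) (n : ℕ) : ∀ k : ℕ, S.V (n + k) → S.V n
  | 0 => fun v => v
  | k + 1 => fun v => S.phiIter n k (S.φ (n + k) v)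

/-- `φ_{m,n} : V m → V n` for `n ≤ m`. -/
def phiLE (S : CoverSystem) {m n : ℕ} (h : n ≤ m) (v : S.V m) : S.V n :=
  S.phiIter n (m - n) (cast (congrArg S.V (Nat.add_sub_cancel' h).symm) v)

/-- The inverse limit space `X` of the sequence of covers. -/
def X (S : CoverSystem) : Type :=
  { x : ∀ n, S.V n // ∀ n, S.φ n (x (n + 1)) = x n }

instance (S : CoverSystem) : TopologicalSpace S.X :=
  inferInstanceAs (TopologicalSpace { x : ∀ n, S.V n // ∀ n, S.φ n (x (n + 1)) = x n })

instance (S : CoverSystem) : MeasurableSpace S.X := borel S.X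
instance (S : CoverSystem) : BorelSpace S.X := ⟨rfl⟩

/-- The projection `φ_{∞,n} : X → V n`. -/
def proj (S : CoverSystem) (x : S.X) (n : ℕ) : S.V n := Subtype.val x n

/-- `f` is the shift map of the inverse limit: it is compatible with all the
edge relations (this determines `f` uniquely). -/
def IsLimitMap (S : CoverSystem) (f : S.X → S.X) : Prop :=
  ∀ (x : S.X) (n : ℕ), (S.proj x n, S.proj (f x) n) ∈ (S.G n).E

/-- `U(v) = φ_{∞,n}⁻¹(v)`. -/
def USet (S : CoverSystem) {n : ℕ} (v : S.V n) : Set S.X := {x | S.proj x n = v}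

/-- `U(e) = U(u) ∩ f⁻¹(U(v))` for an edge `e = (u,v)`. -/
def UEdge (S : CoverSystem) (f : S.X → S.X) {n : ℕ} (e : S.V n × S.V n) : Set S.X :=
  {x | S.proj x n = e.1 ∧ S.proj (f x) n = e.2}

/-- `μ` is an `f`-invariant Borel measure. -/
def Invariant (S : CoverSystem) (f : S.X → S.X) (μ : Measure S.X) : Prop :=
  ∀ B : Set S.X, MeasurableSet B → μ (f ⁻¹' B) = μ B

/-- `μ` is ergodic: every invariant Borel set is null or conull. -/
def ErgodicM (S : CoverSystem) (f : S.X → S.X) (μ : Measure S.X) : Prop :=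
  ∀ B : Set S.X, MeasurableSet B → f ⁻¹' B = B → μ B = 0 ∨ μ B = 1

/-- The vector `μ_n = Σ_{e ∈ E_n} μ(U(e))·e ∈ Δ_n` of a measure `μ`. -/
noncomputable def muVec (S : CoverSystem) (f : S.X → S.X) (μ : Measure S.X) (n : ℕ) :
    S.V n × S.V n → ℝ :=
  fun e => (μ (S.UEdge f e)).toReal

/-- `Δ_∞`: compatible sequences of elements of the simplices `Δ_n = 𝒫(G_n)`. -/
def DeltaInf (S : CoverSystem) : Set (∀ n, S.V n × S.V n → ℝ) :=
  {x | (∀ n, MemP (S.G n) (x n)) ∧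
    ∀ m n : ℕ, ∀ h : n ≤ m, pushVec (S.phiLE h) (x m) = x n}

/-- `C` is a system of circuits enumerated by `N'`. -/
def IsCircuitSystem (S : CoverSystem) (N' : Set ℕ)
    (C : ∀ n, Set (Set (S.V n × S.V n))) : Prop :=
  ∀ n ∈ N', C n ⊆ circuitsOf (S.G n)

/-- The system of circuits `C` expresses the measure `μ`. -/
def Expresses (S : CoverSystem) (f : S.X → S.X) (μ : Measure S.X)
    (N' : Set ℕ) (C : ∀ n, Set (Set (S.V n × S.V n))) : Prop :=
  ∀ n ∈ N', ∃ s : Set (S.V n × S.V n) → ℝ,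
    (∀ c ∈ C n, 0 ≤ s c) ∧ ∀ e, S.muVec f μ n e = ∑ᶠ c ∈ C n, s c * circTilde c e

/-- The system of circuits `C` expresses every ergodic invariant Borel
probability measure. -/
def ExpressesAllErgodic (S : CoverSystem) (f : S.X → S.X)
    (N' : Set ℕ) (C : ∀ n, Set (Set (S.V n × S.V n))) : Prop :=
  ∀ μ : Measure S.X, IsProbabilityMeasure μ → S.Invariant f μ → S.ErgodicM f μ →
    S.Expresses f μ N' C

/-- `𝒞̄_∞`: the set of limit sequences of sequences of circuits chosen from `C`. -/
def limitsOf (S : CoverSystem) (N' : Set ℕ)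
    (C : ∀ n, Set (Set (S.V n × S.V n))) : Set (∀ m, S.V m × S.V m → ℝ) :=
  {y | ∃ c : ∀ n, Set (S.V n × S.V n), (∀ n ∈ N', c n ∈ C n) ∧
    ∀ m : ℕ, Filter.Tendsto
      (fun n : ℕ => if h : m ≤ n then dE (pushVec (S.phiLE h) (circTilde (c n))) (y m) else 1)
      (Filter.atTop ⊓ Filter.principal N') (nhds 0)}

end CoverSystem

/-!
Put `ν_n(v) = ∑_w a_n(v,w)`. Compatibility of the edge masses makes `ν_n` the push-forward of
`ν_{n+1}`, so the finite measures `∑_v ν_n(v) δ_{x_v}` (with `x_v ∈ U(v)`, which exists because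
covers are surjective) agree on every cylinder `φ_{∞,k}⁻¹(A)` once `n ≥ k`. Their eventual values
form an additive content on the ring of cylinders; cylinders are compact and open, so the content
is σ-subadditive, and Carathéodory's theorem extends it to a Borel measure `μ`.

By positive directionality `(f x)_n` depends only on `x_{n+1}`, so `U(e)` and `f⁻¹(U(v))` are
cylinders of level `n + 1`. Compatibility gives `μ(U(e)) = a_n(e)`, and the flow condition gives
`μ(f⁻¹(U(v))) = ∑_u a_n(u,v) = ν_n(v) = μ(U(v))`; two finite measures agreeing on the π-system of
cylinders coincide, so `μ` is `f`-invariant.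
-/

open scoped NNReal ENNReal Classical

namespace MeasureTheory.AddContent

theorem isSigmaSubadditive_of_isCompact_of_isOpen {α : Type*} [TopologicalSpace α]
    {C : Set (Set α)} (hC : IsSetRing C) (hcpt : ∀ s ∈ C, IsCompact s)
    (hopen : ∀ s ∈ C, IsOpen s) (m : AddContent ℝ≥0∞ C) : m.IsSigmaSubadditive := by
  intro s hs hU
  obtain ⟨I, hI⟩ := (hcpt _ hU).elim_finite_subcover s (fun i => hopen _ (hs i)) subset_rfl
  have hUI : ⋃ i, s i = ⋃ i ∈ I, s i :=
    hI.antisymm (Set.iUnion₂_subset fun i _ => Set.subset_iUnion s i)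
  calc m (⋃ i, s i) = m (⋃ i ∈ I, s i) := by rw [hUI]
    _ ≤ ∑ i ∈ I, m (s i) := addContent_biUnion_le hC fun i _ => hs i
    _ ≤ ∑' i, m (s i) := ENNReal.sum_le_tsum I

end MeasureTheory.AddContent

theorem Finset.sum_filter_comp_eq_sum_fiberwise {ι κ M : Type*} [Fintype ι] [Fintype κ]
    [DecidableEq κ] [AddCommMonoid M] (g : ι → κ) (p : κ → Prop) [DecidablePred p] (f : ι → M) :
    ∑ i with p (g i), f i = ∑ j with p j, ∑ i with g i = j, f i := by
  rw [Finset.sum_fiberwise_eq_sum_filter (t := Finset.univ.filter p)]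
  simp only [Finset.mem_filter, Finset.mem_univ, true_and]

lemma NNReal.coe_sum_filter_toNNReal_indicator {α : Type*} [Fintype α] {E : Set α} {a : α → ℝ}
    (ha : ∀ e ∈ E, 0 ≤ a e) (P : α → Prop) [DecidablePred P] :
    ((∑ e with P e, (E.indicator a e).toNNReal : ℝ≥0) : ℝ) = ∑ᶠ e ∈ {e | e ∈ E ∧ P e}, a e := by
  rw [finsum_mem_def, finsum_eq_sum_of_fintype, NNReal.coe_sum, Finset.sum_filter]
  refine Finset.sum_congr rfl fun e _ => ?_
  by_cases he : e ∈ E <;> by_cases hP : P e <;> simp [he, hP, ha e]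

namespace CoverSystem

variable {S : CoverSystem}

lemma phiLE_succ {n : ℕ} (h : n ≤ n + 1) : S.phiLE h = S.φ n := by
  funext v
  have key : ∀ (j : ℕ) (_ : j = 1) (pf : S.V (n + 1) = S.V (n + j)),
      S.phiIter n j (cast pf v) = S.φ n v := by
    rintro j rfl pf
    rfl
  exact key _ (by omega) _

lemma φ_proj (x : S.X) (n : ℕ) : S.φ n (S.proj x (n + 1)) = S.proj x n := x.2 n

lemma continuous_proj (n : ℕ) : Continuous fun x : S.X => S.proj x n :=
  (continuous_apply n).comp continuous_subtype_val

instance : SecondCountableTopology S.X :=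
  TopologicalSpace.Subtype.secondCountableTopology {x : ∀ n, S.V n | ∀ n, S.φ n (x (n + 1)) = x n}

instance : CompactSpace S.X := by
  have hclosed : IsClosed {x : ∀ n, S.V n | ∀ n, S.φ n (x (n + 1)) = x n} := by
    simp only [Set.ofPred_forall]
    exact isClosed_iInter fun n =>
      isClosed_eq (continuous_of_discreteTopology.comp (continuous_apply (n + 1)))
        (continuous_apply n)
  exact isCompact_iff_compactSpace.mp hclosed.isCompact

lemma proj_eq_proj_of_le {x y : S.X} {n m : ℕ} (hnm : n ≤ m)
    (hxy : S.proj x m = S.proj y m) : S.proj x n = S.proj y n := by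
  induction hnm using Nat.decreasingInduction with
  | self => exact hxy
  | of_succ k _ ih => rw [← φ_proj x k, ← φ_proj y k, ih]

def cylinder (S : CoverSystem) (n : ℕ) (A : Set (S.V n)) : Set S.X := (S.proj · n) ⁻¹' A

def cylinders (S : CoverSystem) : Set (Set S.X) := {s | ∃ n A, s = S.cylinder n A}

lemma cylinder_preimage_φ (n : ℕ) (A : Set (S.V n)) :
    S.cylinder (n + 1) (S.φ n ⁻¹' A) = S.cylinder n A := by
  ext x
  simp only [cylinder, Set.mem_preimage, φ_proj]

lemma exists_cylinder_eq_of_le {n m : ℕ} (hnm : n ≤ m) (A : Set (S.V n)) :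
    ∃ B, S.cylinder n A = S.cylinder m B := by
  induction m, hnm using Nat.le_induction with
  | base => exact ⟨A, rfl⟩
  | succ m _ ih =>
    obtain ⟨B, hB⟩ := ih
    exact ⟨S.φ m ⁻¹' B, hB.trans (cylinder_preimage_φ m B).symm⟩

lemma exists_cylinder_eq_cylinder (n k : ℕ) (A : Set (S.V n)) (B : Set (S.V k)) :
    ∃ m A' B', S.cylinder n A = S.cylinder m A' ∧ S.cylinder k B = S.cylinder m B' := by
  obtain ⟨A', hA'⟩ := exists_cylinder_eq_of_le (le_max_left n k) A
  obtain ⟨B', hB'⟩ := exists_cylinder_eq_of_le (le_max_right n k) B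
  exact ⟨_, A', B', hA', hB'⟩

lemma isClopen_cylinder (n : ℕ) (A : Set (S.V n)) : IsClopen (S.cylinder n A) :=
  (isClopen_discrete A).preimage (continuous_proj n)

lemma isSetRing_cylinders : IsSetRing S.cylinders where
  empty_mem := ⟨0, ∅, rfl⟩
  union_mem := by
    rintro _ _ ⟨n, A, rfl⟩ ⟨k, B, rfl⟩
    obtain ⟨m, A', B', hA, hB⟩ := exists_cylinder_eq_cylinder n k A B
    exact ⟨m, A' ∪ B', by rw [hA, hB]; rfl⟩
  sdiff_mem := by
    rintro _ _ ⟨n, A, rfl⟩ ⟨k, B, rfl⟩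
    obtain ⟨m, A', B', hA, hB⟩ := exists_cylinder_eq_cylinder n k A B
    exact ⟨m, A' \ B', by rw [hA, hB]; rfl⟩

lemma isTopologicalBasis_cylinders : TopologicalSpace.IsTopologicalBasis S.cylinders := by
  refine TopologicalSpace.isTopologicalBasis_of_isOpen_of_nhds
    (fun _ ⟨n, A, hs⟩ => hs ▸ (isClopen_cylinder n A).isOpen) fun x u hxu hu => ?_
  obtain ⟨U, hU, rfl⟩ := isOpen_induced_iff.mp hu
  obtain ⟨I, t, hIt, hsub⟩ := isOpen_pi_iff.mp hU x.val hxu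
  refine ⟨S.cylinder (I.sup id) {S.proj x (I.sup id)}, ⟨_, _, rfl⟩, rfl, fun y hy => hsub ?_⟩
  intro i hi
  have hiN : i ≤ I.sup id := Finset.le_sup (f := id) hi
  show S.proj y i ∈ t i
  rw [proj_eq_proj_of_le hiN hy]
  exact (hIt i hi).2

lemma borel_eq_generateFrom_cylinders : borel S.X = MeasurableSpace.generateFrom S.cylinders :=
  isTopologicalBasis_cylinders.borel_eq_generateFrom

lemma surjective_φ (n : ℕ) : Function.Surjective (S.φ n) := by
  intro v
  obtain ⟨u, hu⟩ := (S.G n).surj_init v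
  obtain ⟨w, w', -, hw⟩ := (S.cover n).edgeSurj (v, u) hu
  exact ⟨w, congrArg Prod.fst hw⟩

/-- `φ_{n,m}` without the cast of `phiLE`. -/
def descend {n : ℕ} (v : S.V n) {m : ℕ} (hmn : m ≤ n) : S.V m :=
  Nat.decreasingInduction (motive := fun m _ => S.V m) (fun k _ w => S.φ k w) v hmn

noncomputable def liftSeq {n : ℕ} (v : S.V n) : ∀ m, S.V m
  | 0 => descend v (Nat.zero_le n)
  | m + 1 =>
    if h : m + 1 ≤ n then descend v h else Function.surjInv (surjective_φ m) (liftSeq v m)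

lemma φ_descend {n m : ℕ} (v : S.V n) (h : m + 1 ≤ n) :
    S.φ m (descend v h) = descend v (Nat.le_of_succ_le h) :=
  (Nat.decreasingInduction_succ_left _ _ h _).symm

lemma liftSeq_of_le {n m : ℕ} (v : S.V n) (hmn : m ≤ n) : liftSeq v m = descend v hmn := by
  cases m with
  | zero => rfl
  | succ m => exact dif_pos hmn

lemma φ_liftSeq {n : ℕ} (v : S.V n) (m : ℕ) : S.φ m (liftSeq v (m + 1)) = liftSeq v m := by
  by_cases h : m + 1 ≤ n
  · rw [liftSeq_of_le v h, liftSeq_of_le v (Nat.le_of_succ_le h), φ_descend]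
  · rw [liftSeq, dif_neg h]
    exact Function.surjInv_eq _ _

noncomputable def liftPoint {n : ℕ} (v : S.V n) : S.X := ⟨liftSeq v, φ_liftSeq v⟩

lemma proj_liftPoint {n : ℕ} (v : S.V n) : S.proj (liftPoint v) n = v := by
  show liftSeq v n = v
  rw [liftSeq_of_le v le_rfl, descend, Nat.decreasingInduction_self]

variable {f : S.X → S.X}

noncomputable def outNeighbor (S : CoverSystem) (n : ℕ) (w : S.V n) : S.V n :=
  ((S.G n).surj_init w).choose

lemma mem_E_outNeighbor (n : ℕ) (w : S.V n) : (w, S.outNeighbor n w) ∈ (S.G n).E :=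
  ((S.G n).surj_init w).choose_spec

lemma φ_outNeighbor_eq_of_mem {n : ℕ} {e : S.V (n + 1) × S.V (n + 1)} (he : e ∈ (S.G (n + 1)).E) :
    S.φ n (S.outNeighbor (n + 1) e.1) = S.φ n e.2 :=
  (S.cover n).posDir _ _ _ (mem_E_outNeighbor _ _) he

lemma proj_limitMap (hf : S.IsLimitMap f) (x : S.X) (n : ℕ) :
    S.proj (f x) n = S.φ n (S.outNeighbor (n + 1) (S.proj x (n + 1))) := by
  rw [← φ_proj (f x) n, φ_outNeighbor_eq_of_mem (hf x (n + 1))]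

lemma continuous_of_isLimitMap (hf : S.IsLimitMap f) : Continuous f := by
  refine continuous_induced_rng.mpr (continuous_pi fun n => ?_)
  have h : Continuous fun x => S.φ n (S.outNeighbor (n + 1) (S.proj x (n + 1))) :=
    (continuous_of_discreteTopology (f := fun w => S.φ n (S.outNeighbor (n + 1) w))).comp
      (continuous_proj (n + 1))
  exact h.congr fun x => (proj_limitMap hf x n).symm

lemma preimage_cylinder (hf : S.IsLimitMap f) (n : ℕ) (A : Set (S.V n)) :
    f ⁻¹' S.cylinder n A = S.cylinder (n + 1) {w | S.φ n (S.outNeighbor (n + 1) w) ∈ A} := by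
  ext x
  simp only [cylinder, Set.mem_preimage, Set.mem_ofPred_eq, proj_limitMap hf]

lemma UEdge_eq_cylinder (hf : S.IsLimitMap f) {n : ℕ} (e : S.V n × S.V n) :
    S.UEdge f e =
      S.cylinder (n + 1) {w | S.φ n w = e.1 ∧ S.φ n (S.outNeighbor (n + 1) w) = e.2} := by
  ext x
  simp only [UEdge, cylinder, Set.mem_preimage, Set.mem_ofPred_eq, proj_limitMap hf, φ_proj]

lemma measurableSet_of_mem_cylinders {s : Set S.X} (hs : s ∈ S.cylinders) : MeasurableSet s := by
  obtain ⟨n, A, rfl⟩ := hs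
  exact (isClopen_cylinder n A).isOpen.measurableSet

lemma measure_ext_of_cylinder {μ μ' : Measure S.X} [IsFiniteMeasure μ]
    (h : ∀ n A, μ (S.cylinder n A) = μ' (S.cylinder n A)) : μ = μ' :=
  ext_of_generate_finite _ borel_eq_generateFrom_cylinders
    isSetRing_cylinders.isSetSemiring.isPiSystem (fun _ ⟨n, A, hs⟩ => hs ▸ h n A) (h 0 Set.univ)

section VertexWeights

variable {ν : ∀ n, S.V n → ℝ≥0}

variable (S ν) in
def IsCompatible : Prop := ∀ n v, ∑ w with S.φ n w = v, ν (n + 1) w = ν n v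

variable (ν) in
noncomputable def cylinderMass (n : ℕ) (A : Set (S.V n)) : ℝ≥0 := ∑ v with v ∈ A, ν n v

lemma cylinderMass_preimage_φ (hν : S.IsCompatible ν)
    (n : ℕ) (A : Set (S.V n)) : cylinderMass ν (n + 1) (S.φ n ⁻¹' A) = cylinderMass ν n A := by
  simp only [cylinderMass, Set.mem_preimage]
  rw [Finset.sum_filter_comp_eq_sum_fiberwise (S.φ n) (· ∈ A)]
  exact Finset.sum_congr rfl fun v _ => hν n v

variable (ν) in
noncomputable def diracApprox (n : ℕ) : Measure S.X :=
  ∑ v, (ν n v : ℝ≥0∞) • Measure.dirac (liftPoint v)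

lemma diracApprox_cylinder_self (n : ℕ) (A : Set (S.V n)) :
    diracApprox ν n (S.cylinder n A) = cylinderMass ν n A := by
  simp only [diracApprox, cylinderMass, Measure.coe_finsetSum, Finset.sum_apply,
    Measure.smul_apply, Measure.dirac_apply' _ (isClopen_cylinder n A).isOpen.measurableSet,
    ENNReal.ofNNReal_finsetSum, Finset.sum_filter]
  refine Finset.sum_congr rfl fun v _ => ?_
  by_cases hv : v ∈ A <;> simp [cylinder, proj_liftPoint, hv]

lemma diracApprox_cylinder (hν : S.IsCompatible ν)
    {k n : ℕ} (hkn : k ≤ n) (A : Set (S.V k)) :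
    diracApprox ν n (S.cylinder k A) = cylinderMass ν k A := by
  induction hkn using Nat.decreasingInduction with
  | self => exact diracApprox_cylinder_self n A
  | of_succ k _ ih => rw [← cylinder_preimage_φ k A, ih, cylinderMass_preimage_φ hν]

lemma tendsto_diracApprox_cylinder (hν : S.IsCompatible ν)
    (k : ℕ) (A : Set (S.V k)) :
    Tendsto (fun n => diracApprox ν n (S.cylinder k A)) atTop (𝓝 (cylinderMass ν k A)) :=
  tendsto_atTop_of_eventually_const fun _ hn => diracApprox_cylinder hν hn A

lemma eventually_diracApprox_eq_limUnder
    (hν : S.IsCompatible ν) {s : Set S.X}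
    (hs : s ∈ S.cylinders) :
    ∀ᶠ n in atTop, diracApprox ν n s = limUnder atTop fun n => diracApprox ν n s := by
  obtain ⟨k, A, rfl⟩ := hs
  rw [(tendsto_diracApprox_cylinder hν k A).limUnder_eq]
  exact eventually_atTop.2 ⟨k, fun _ hn => diracApprox_cylinder hν hn A⟩

noncomputable def cylinderContent (hν : S.IsCompatible ν) :
    AddContent ℝ≥0∞ S.cylinders :=
  isSetRing_cylinders.addContent_of_union (fun s => limUnder atTop fun n => diracApprox ν n s)
    (by simp only [measure_empty]; exact tendsto_const_nhds.limUnder_eq) fun hs ht hst => by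
      obtain ⟨n, ⟨hns, hnt⟩, hnst⟩ := ((eventually_diracApprox_eq_limUnder hν hs).and
        (eventually_diracApprox_eq_limUnder hν ht)).and
        (eventually_diracApprox_eq_limUnder hν (isSetRing_cylinders.union_mem hs ht)) |>.exists
      rw [← hns, ← hnt, ← hnst]
      exact measure_union hst (measurableSet_of_mem_cylinders ht)

noncomputable def limitMeasure (hν : S.IsCompatible ν) :
    Measure S.X :=
  (cylinderContent hν).measure isSetRing_cylinders.isSetSemiring
    borel_eq_generateFrom_cylinders.le
    ((cylinderContent hν).isSigmaSubadditive_of_isCompact_of_isOpen isSetRing_cylinders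
      (fun _ ⟨n, A, hs⟩ => hs ▸ (isClopen_cylinder n A).isClosed.isCompact)
      fun _ ⟨n, A, hs⟩ => hs ▸ (isClopen_cylinder n A).isOpen)

lemma limitMeasure_cylinder (hν : S.IsCompatible ν)
    (n : ℕ) (A : Set (S.V n)) : limitMeasure hν (S.cylinder n A) = cylinderMass ν n A := by
  rw [limitMeasure, AddContent.measure_eq _ _ borel_eq_generateFrom_cylinders _ ⟨n, A, rfl⟩]
  exact (tendsto_diracApprox_cylinder hν n A).limUnder_eq

instance (hν : S.IsCompatible ν) :
    IsFiniteMeasure (limitMeasure hν) :=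
  ⟨(limitMeasure_cylinder hν 0 Set.univ).trans_lt ENNReal.coe_lt_top⟩

end VertexWeights

section EdgeWeights

variable (b : ∀ n, S.V n × S.V n → ℝ≥0)

noncomputable def outWeight (n : ℕ) (v : S.V n) : ℝ≥0 := ∑ e with e.1 = v, b n e

lemma cylinderMass_outWeight (n : ℕ) (A : Set (S.V n)) :
    cylinderMass (outWeight b) n A = ∑ e with e.1 ∈ A, b n e :=
  (Finset.sum_filter_comp_eq_sum_fiberwise Prod.fst (· ∈ A) (b n)).symm

variable {b}

lemma isCompatible_outWeight
    (hcompat : ∀ n e, ∑ e' with edgeMap (S.φ n) e' = e, b (n + 1) e' = b n e) :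
    S.IsCompatible (outWeight b) := by
  intro n v
  simp only [outWeight]
  rw [← Finset.sum_filter_comp_eq_sum_fiberwise Prod.fst (S.φ n · = v)]
  exact (Finset.sum_filter_comp_eq_sum_fiberwise (edgeMap (S.φ n)) (·.1 = v) _).trans
    (Finset.sum_congr rfl fun e _ => hcompat n e)

lemma sum_fiber_edgeMap_eq_zero (hsupp : ∀ n e, e ∉ (S.G n).E → b n e = 0) {n : ℕ}
    {e : S.V n × S.V n} (he : e ∉ (S.G n).E) :
    ∑ e' with edgeMap (S.φ n) e' = e, b (n + 1) e' = 0 := by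
  refine Finset.sum_eq_zero fun e' he' => hsupp _ _ fun h => he ?_
  rw [← (Finset.mem_filter.1 he').2]
  exact (S.cover n).hom _ _ h

lemma sum_filter_outNeighbor_eq (hsupp : ∀ n e, e ∉ (S.G n).E → b n e = 0) (n : ℕ)
    (P : S.V (n + 1) → S.V n → Prop) :
    ∑ e with P e.1 (S.φ n (S.outNeighbor (n + 1) e.1)), b (n + 1) e =
      ∑ e with P e.1 (S.φ n e.2), b (n + 1) e := by
  rw [Finset.sum_filter, Finset.sum_filter]
  refine Finset.sum_congr rfl fun e _ => ?_
  by_cases he : e ∈ (S.G (n + 1)).E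
  · rw [φ_outNeighbor_eq_of_mem he]
  · simp only [hsupp _ e he, ite_self]

theorem exists_invariant_measure_of_edgeWeights (hf : S.IsLimitMap f)
    (hsupp : ∀ n e, e ∉ (S.G n).E → b n e = 0)
    (hflow : ∀ n v, ∑ e with e.2 = v, b n e = ∑ e with e.1 = v, b n e)
    (hcompat : ∀ n e, ∑ e' with edgeMap (S.φ n) e' = e, b (n + 1) e' = b n e) :
    ∃ μ : Measure S.X, S.Invariant f μ ∧ ∀ n e, μ (S.UEdge f e) = b n e := by
  set μ := limitMeasure (isCompatible_outWeight hcompat)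
  have hmass : ∀ n (P : S.V (n + 1) → S.V n → Prop),
      μ (S.cylinder (n + 1) {w | P w (S.φ n (S.outNeighbor (n + 1) w))}) =
        ∑ e with P e.1 (S.φ n e.2), b (n + 1) e := fun n P => by
    rw [limitMeasure_cylinder, cylinderMass_outWeight, ← sum_filter_outNeighbor_eq hsupp]
    rfl
  have hmeas : Measurable f := (continuous_of_isLimitMap hf).measurable
  have hmap : μ = μ.map f := measure_ext_of_cylinder fun n A => by
    rw [Measure.map_apply hmeas (isClopen_cylinder n A).isOpen.measurableSet,
      preimage_cylinder hf, hmass n fun _ y => y ∈ A, ← cylinder_preimage_φ n A,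
      limitMeasure_cylinder, cylinderMass,
      Finset.sum_filter_comp_eq_sum_fiberwise Prod.snd (S.φ n · ∈ A)]
    simp only [hflow, outWeight, Set.mem_preimage]
  refine ⟨μ, fun B hB => by rw [← Measure.map_apply hmeas hB, ← hmap], fun n e => ?_⟩
  rw [UEdge_eq_cylinder hf, hmass n fun w y => S.φ n w = e.1 ∧ y = e.2, ← hcompat n e]
  simp only [edgeMap, Prod.ext_iff]
  congr

end EdgeWeights

end CoverSystem

/-- A compatible assignment of nonnegative masses to the edge
sets `U(e)`, satisfying the flow condition at each vertex, extends to an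
`f`-invariant Borel measure on the inverse limit. -/
theorem invariant_measure_from_edge_masses (S : CoverSystem) (f : S.X → S.X)
    (hf : S.IsLimitMap f) (a : ∀ n, S.V n × S.V n → ℝ)
    (ha : ∀ n : ℕ, ∀ e ∈ (S.G n).E, 0 ≤ a n e)
    (hflow : ∀ (n : ℕ) (v : S.V n),
      (∑ᶠ e ∈ {e : S.V n × S.V n | e ∈ (S.G n).E ∧ e.2 = v}, a n e) =
        ∑ᶠ e ∈ {e : S.V n × S.V n | e ∈ (S.G n).E ∧ e.1 = v}, a n e)
    (hcompat : ∀ m n : ℕ, ∀ h : n < m, ∀ e ∈ (S.G n).E,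
      (∑ᶠ e' ∈ {e' : S.V m × S.V m | e' ∈ (S.G m).E ∧ edgeMap (S.phiLE h.le) e' = e},
        a m e') = a n e) :
    ∃ μ : MeasureTheory.Measure S.X, S.Invariant f μ ∧
      ∀ n : ℕ, ∀ e ∈ (S.G n).E, μ (S.UEdge f e) = ENNReal.ofReal (a n e) := by
  set b : ∀ n, S.V n × S.V n → ℝ≥0 := fun n e => ((S.G n).E.indicator (a n) e).toNNReal
  have hcoe (n : ℕ) (P : S.V n × S.V n → Prop) [DecidablePred P] :
      ((∑ e with P e, b n e : ℝ≥0) : ℝ) = ∑ᶠ e ∈ {e | e ∈ (S.G n).E ∧ P e}, a n e :=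
    NNReal.coe_sum_filter_toNNReal_indicator (ha n) P
  have hsupp (n : ℕ) (e : S.V n × S.V n) (he : e ∉ (S.G n).E) : b n e = 0 := by simp [b, he]
  have hcompat' (n : ℕ) (e : S.V n × S.V n) :
      ∑ e' with edgeMap (S.φ n) e' = e, b (n + 1) e' = b n e := by
    by_cases he : e ∈ (S.G n).E
    · refine NNReal.coe_injective ?_
      rw [hcoe, ← S.phiLE_succ n.lt_succ_self.le, hcompat (n + 1) n n.lt_succ_self e he]
      simp [b, he, ha n e he]
    · rw [hsupp n e he, CoverSystem.sum_fiber_edgeMap_eq_zero hsupp he]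
  obtain ⟨μ, hinv, hμ⟩ := CoverSystem.exists_invariant_measure_of_edgeWeights hf hsupp
    (fun n v => NNReal.coe_injective (by rw [hcoe, hcoe]; exact hflow n v)) hcompat'
  refine ⟨μ, hinv, fun n e he => ?_⟩
  rw [hμ n e]
  simp [b, he, ENNReal.ofReal]
end

section
/- Let G = (V,E) be a graph. Then the set 𝒞(G) of circuit graphs of G (viewed as vectors in the real vector space with basis E) is linearly independent if and only if every circuit graph c ∈ 𝒞(G) has an edge e that belongs to no other circuit graph of G. -/
open Filter Topology MeasureTheory

/-!
If every circuit has a private edge, evaluation at the private edges maps the circuits to the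
standard basis vectors, so they are independent.

Conversely, suppose every edge of a circuit `c` lies on some other circuit. Then the sum of all the
circuits other than `c` dominates `c` edgewise, and subtracting `c` leaves a nonnegative integer
circulation. Following edges of positive weight until a vertex repeats extracts a circuit from any
nonzero circulation, so this remainder is a sum of circuits `c₁ + ⋯ + cₖ`. Hence the sum of the
circuits other than `c` equals `c + c₁ + ⋯ + cₖ`: two different combinations with natural
coefficients of the same vectors, contradicting linear independence.
-/

open Finset Function

lemma linearIndependent_indicator_of_exists_private {ι α R : Type*} [Semiring R] (s : ι → Set α)
    (h : ∀ i, ∃ a ∈ s i, ∀ j, j ≠ i → a ∉ s j) :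
    LinearIndependent R fun i => (s i).indicator (1 : α → R) := by
  classical
  choose a has hpriv using h
  refine LinearIndependent.of_comp (LinearMap.funLeft R R a) ?_
  convert Pi.linearIndependent_single_one ι R with i
  ext j
  by_cases hij : j = i
  · subst hij
    simp [has]
  · simp [hij, hpriv j i (Ne.symm hij)]

lemma LinearIndependent.nat_indicator {ι α : Type*} {s : ι → Set α}
    (h : LinearIndependent ℝ fun i => (s i).indicator (1 : α → ℝ)) :
    LinearIndependent ℕ fun i => (s i).indicator (1 : α → ℕ) := by
  refine LinearIndependent.of_comp ((Nat.castAddMonoidHom ℝ).toNatLinearMap.compLeft α) ?_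
  convert h.restrict_scalars' ℕ with i
  · ext x
    by_cases hx : x ∈ s i <;> simp [hx]
  · exact Subsingleton.elim _ _

section

variable {V : Type}

section Circuits

variable {G : DirGraph V}

lemma walkEdges_eq_range {l : ℕ} (w : Fin (l + 1) → V) :
    walkEdges w = Set.range fun i : Fin l => (w i.castSucc, w i.succ) := by
  ext e
  simp [walkEdges, eq_comm]

lemma subset_edges_of_mem_circuitsOf {c : Set (V × V)} (hc : c ∈ circuitsOf G) : c ⊆ G.E := by
  obtain ⟨l, -, w, hw, -, -, rfl⟩ := hc
  rintro _ ⟨i, rfl⟩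
  exact hw i

lemma nonempty_of_mem_circuitsOf {c : Set (V × V)} (hc : c ∈ circuitsOf G) : c.Nonempty := by
  obtain ⟨l, hl, w, -, -, -, rfl⟩ := hc
  exact ⟨_, ⟨⟨0, hl⟩, rfl⟩⟩

lemma indicator_range_apply_eq_card [DecidableEq V] {ι : Type*} [Fintype ι] {f : ι → V × V}
    (hf : Injective f) (x : V × V) :
    (Set.range f).indicator (1 : V × V → ℕ) x = #{i | f i = x} := by
  by_cases hx : x ∈ Set.range f
  · obtain ⟨j, rfl⟩ := hx
    rw [Set.indicator_of_mem (Set.mem_range_self j), Pi.one_apply, eq_comm, card_eq_one]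
    exact ⟨j, by ext; simp [hf.eq_iff]⟩
  · rw [Set.indicator_of_notMem hx, eq_comm, card_eq_zero, filter_eq_empty_iff]
    exact fun i _ hi => hx ⟨i, hi⟩

lemma sum_indicator_range_inflow_eq_outflow [Fintype V] {ι : Type*} [Fintype ι] {f : ι → V × V}
    (hf : Injective f) (σ : ι ≃ ι) (hσ : ∀ i, (f (σ i)).1 = (f i).2) (v : V) :
    ∑ u, (Set.range f).indicator (1 : V × V → ℕ) (u, v) =
      ∑ u, (Set.range f).indicator (1 : V × V → ℕ) (v, u) := by
  classical
  have heads : ∑ u, (Set.range f).indicator (1 : V × V → ℕ) (u, v) = #{i | (f i).2 = v} := by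
    simp_rw [indicator_range_apply_eq_card hf]
    rw [card_eq_sum_card_fiberwise (f := fun i => (f i).1) (t := univ) (fun _ _ => mem_univ _)]
    simp_rw [filter_filter, Prod.ext_iff, and_comm]
  have tails : ∑ u, (Set.range f).indicator (1 : V × V → ℕ) (v, u) = #{i | (f i).1 = v} := by
    simp_rw [indicator_range_apply_eq_card hf]
    rw [card_eq_sum_card_fiberwise (f := fun i => (f i).2) (t := univ) (fun _ _ => mem_univ _)]
    simp_rw [filter_filter, Prod.ext_iff]
  rw [heads, tails, ← card_map σ.toEmbedding]
  congr 1
  ext i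
  simp [← hσ]

lemma injective_walkEdge {l : ℕ} {w : Fin (l + 1) → V}
    (hsimple : ∀ i j : Fin (l + 1), i < j → w i = w j → i = 0 ∧ j = Fin.last l) :
    Injective fun i : Fin l => (w i.castSucc, w i.succ) := by
  intro i j hij
  have hw : w i.castSucc = w j.castSucc := congrArg Prod.fst hij
  by_contra hne
  rcases lt_or_gt_of_ne hne with h | h
  · exact (Fin.castSucc_lt_last j).ne (hsimple _ _ (Fin.castSucc_lt_castSucc_iff.mpr h) hw).2
  · exact (Fin.castSucc_lt_last i).ne (hsimple _ _ (Fin.castSucc_lt_castSucc_iff.mpr h) hw.symm).2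

lemma castSucc_finRotate_eq_succ {l : ℕ} {w : Fin (l + 1) → V} (hclosed : w (Fin.last l) = w 0)
    (i : Fin l) : w (finRotate l i).castSucc = w i.succ := by
  obtain ⟨n, rfl⟩ : ∃ n, l = n + 1 := Nat.exists_eq_succ_of_ne_zero i.pos.ne'
  by_cases hi : i = Fin.last n
  · subst hi
    simp [hclosed]
  · congr 1
    ext
    rw [Fin.val_castSucc, coe_finRotate_of_ne_last hi, Fin.val_succ]

end Circuits

section Iterates

variable {G : DirGraph V}

lemma exists_iterate_mem_periodicPts [Finite V] (F : V → V) (x : V) :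
    ∃ i, F^[i] x ∈ periodicPts F := by
  obtain ⟨i, j, hij, heq⟩ : ∃ i j, i < j ∧ F^[i] x = F^[j] x := by
    obtain ⟨i, j, hne, heq⟩ := Finite.exists_ne_map_eq_of_infinite fun n => F^[n] x
    rcases hne.lt_or_gt with h | h
    exacts [⟨i, j, h, heq⟩, ⟨j, i, h, heq.symm⟩]
  refine ⟨i, j - i, Nat.sub_pos_of_lt hij, ?_⟩
  rw [IsPeriodicPt, IsFixedPt, ← iterate_add_apply, Nat.sub_add_cancel hij.le, heq]

lemma walkEdges_iterate_mem_circuitsOf {F : V → V} {y : V} (hy : y ∈ periodicPts F)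
    (hE : ∀ n, (F^[n] y, F^[n + 1] y) ∈ G.E) :
    walkEdges (fun k : Fin (minimalPeriod F y + 1) => F^[k] y) ∈ circuitsOf G := by
  have hpos := minimalPeriod_pos_of_mem_periodicPts hy
  refine ⟨_, hpos, _, fun k => hE k, by simp, ?_, rfl⟩
  intro i j hij heq
  have hij' : (i : ℕ) < j := hij
  have hj : (j : ℕ) = minimalPeriod F y := by
    by_contra hne
    have hj' : (j : ℕ) < minimalPeriod F y := lt_of_le_of_ne (Nat.lt_succ_iff.mp j.2) hne
    exact hij'.ne ((iterate_eq_iterate_iff_of_lt_minimalPeriod (hij'.trans hj') hj').mp heq)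
  have hi0 : F^[(i : ℕ)] y = F^[0] y := by
    rw [heq, hj]
    exact isPeriodicPt_minimalPeriod F y
  refine ⟨Fin.ext ?_, Fin.ext hj⟩
  simpa using (iterate_eq_iterate_iff_of_lt_minimalPeriod (hij'.trans_eq hj) hpos).mp hi0

lemma exists_mem_circuitsOf_subset [Finite V] {S : Set (V × V)} (hS : S ⊆ G.E)
    (hne : S.Nonempty) (hout : ∀ e ∈ S, ∃ u, (e.2, u) ∈ S) : ∃ c ∈ circuitsOf G, c ⊆ S := by
  choose! F hF using fun v (h : ∃ u, (u, v) ∈ S) => hout _ h.choose_spec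
  obtain ⟨e₀, he₀⟩ := hne
  have hin : ∀ n, ∃ u, (u, F^[n] e₀.2) ∈ S := by
    intro n
    induction n with
    | zero => exact ⟨e₀.1, he₀⟩
    | succ n ih => exact ⟨_, by simpa only [iterate_succ_apply'] using hF _ ih⟩
  obtain ⟨i, hi⟩ := exists_iterate_mem_periodicPts F e₀.2
  have hedge : ∀ n, (F^[n] (F^[i] e₀.2), F^[n + 1] (F^[i] e₀.2)) ∈ S := by
    intro n
    simpa only [← iterate_add_apply, iterate_succ_apply'] using hF _ (hin (n + i))
  refine ⟨_, walkEdges_iterate_mem_circuitsOf hi fun n => hS (hedge n), ?_⟩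
  rintro _ ⟨k, rfl⟩
  exact hedge k

end Iterates

section Circulations

variable [Fintype V]

structure IsCirculation (G : DirGraph V) (g : V × V → ℕ) : Prop where
  support_subset : support g ⊆ G.E
  inflow_eq_outflow : ∀ v, ∑ u, g (u, v) = ∑ u, g (v, u)

variable {G : DirGraph V}

lemma isCirculation_indicator {c : Set (V × V)} (hc : c ∈ circuitsOf G) :
    IsCirculation G (c.indicator 1) := by
  refine ⟨Set.support_indicator_subset.trans (subset_edges_of_mem_circuitsOf hc), ?_⟩
  obtain ⟨l, -, w, -, hclosed, hsimple, rfl⟩ := hc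
  rw [walkEdges_eq_range]
  exact sum_indicator_range_inflow_eq_outflow (injective_walkEdge hsimple) (finRotate l)
    (castSucc_finRotate_eq_succ hclosed)

lemma isCirculation_sum {ι : Type*} (s : Finset ι) {g : ι → V × V → ℕ}
    (hg : ∀ i ∈ s, IsCirculation G (g i)) : IsCirculation G (∑ i ∈ s, g i) := by
  refine ⟨fun e he => ?_, fun v => ?_⟩
  · obtain ⟨i, hi, hne⟩ : ∃ i ∈ s, g i e ≠ 0 := by simpa using he
    exact (hg i hi).support_subset hne
  · simp only [Finset.sum_apply]
    rw [sum_comm, sum_comm (s := univ)]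
    exact sum_congr rfl fun i hi => (hg i hi).inflow_eq_outflow v

lemma IsCirculation.tsub {g h : V × V → ℕ} (hg : IsCirculation G g) (hh : IsCirculation G h)
    (hle : h ≤ g) : IsCirculation G (g - h) := by
  refine ⟨fun e he => hg.support_subset fun h0 => he (by simp [h0]), fun v => ?_⟩
  simp only [Pi.sub_apply]
  rw [sum_tsub_distrib _ fun u _ => hle (u, v), sum_tsub_distrib _ fun u _ => hle (v, u),
    hg.inflow_eq_outflow, hh.inflow_eq_outflow]

lemma IsCirculation.exists_mem_circuitsOf_subset_support {g : V × V → ℕ}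
    (hg : IsCirculation G g) (hne : g ≠ 0) : ∃ c ∈ circuitsOf G, c ⊆ support g := by
  refine exists_mem_circuitsOf_subset hg.support_subset (support_nonempty_iff.mpr hne)
    fun e he => ?_
  have hin : ∑ u, g (u, e.2) ≠ 0 := fun h => he (sum_eq_zero_iff.mp h e.1 (mem_univ _))
  rw [hg.inflow_eq_outflow] at hin
  obtain ⟨u, -, hu⟩ := exists_ne_zero_of_sum_ne_zero hin
  exact ⟨u, hu⟩

lemma IsCirculation.exists_eq_linearCombination {g : V × V → ℕ} (hg : IsCirculation G g) :
    ∃ m : circuitsOf G →₀ ℕ, g =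
      Finsupp.linearCombination ℕ (fun c : circuitsOf G => (c : Set (V × V)).indicator 1) m := by
  induction hN : ∑ e, g e using Nat.strong_induction_on generalizing g with
  | _ N ih =>
  by_cases h0 : g = 0
  · exact ⟨0, by simp [h0]⟩
  obtain ⟨c, hc, hcg⟩ := hg.exists_mem_circuitsOf_subset_support h0
  have hle : c.indicator 1 ≤ g := by
    intro e
    by_cases he : e ∈ c
    · simpa [he, Nat.one_le_iff_ne_zero] using hcg he
    · simp [he]
  have hlt : ∑ e, (g - c.indicator (1 : V × V → ℕ)) e < N := by
    obtain ⟨e, he⟩ := nonempty_of_mem_circuitsOf hc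
    rw [← hN]
    refine sum_lt_sum (fun _ _ => tsub_le_self) ⟨e, mem_univ _, ?_⟩
    simpa [he] using Nat.sub_lt (Nat.pos_of_ne_zero (hcg he)) one_pos
  obtain ⟨m, hm⟩ := ih _ hlt (hg.tsub (isCirculation_indicator hc) hle) rfl
  refine ⟨m + Finsupp.single ⟨c, hc⟩ 1, ?_⟩
  rw [map_add, ← hm, Finsupp.linearCombination_single, one_smul, tsub_add_cancel_of_le hle]

lemma exists_private_edge_of_linearIndependent
    (hli : LinearIndependent ℕ fun c : circuitsOf G => (c : Set (V × V)).indicator (1 : V × V → ℕ))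
    {c : Set (V × V)} (hc : c ∈ circuitsOf G) :
    ∃ e ∈ c, ∀ c' ∈ circuitsOf G, c' ≠ c → e ∉ c' := by
  classical
  by_contra! hshared
  have := Fintype.ofFinite (circuitsOf G)
  set v := fun c : circuitsOf G => (c : Set (V × V)).indicator (1 : V × V → ℕ)
  set c₀ : circuitsOf G := ⟨c, hc⟩
  set others := univ.erase c₀
  have hcirc : IsCirculation G (∑ d ∈ others, v d) :=
    isCirculation_sum _ fun d _ => isCirculation_indicator d.2
  have hle : c.indicator 1 ≤ ∑ d ∈ others, v d := by
    intro e
    by_cases he : e ∈ c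
    · obtain ⟨d, hd, hdc, hed⟩ := hshared e he
      have hmem : ⟨d, hd⟩ ∈ others :=
        mem_erase.mpr ⟨fun h => hdc (congrArg Subtype.val h), mem_univ _⟩
      calc c.indicator 1 e = v ⟨d, hd⟩ e := by simp [v, he, hed]
        _ ≤ _ := by
          rw [Finset.sum_apply]
          exact single_le_sum (f := fun d => v d e) (fun _ _ => Nat.zero_le _) hmem
    · simp [he]
  obtain ⟨m, hm⟩ := (hcirc.tsub (isCirculation_indicator hc) hle).exists_eq_linearCombination
  have hmult : ∑ d ∈ others, Finsupp.single d 1 = Finsupp.single c₀ 1 + m := hli <| by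
    rw [map_sum, map_add, ← hm, Finsupp.linearCombination_single, one_smul,
      add_tsub_cancel_of_le hle]
    simp [v]
  have hc₀ : (∑ d ∈ others, Finsupp.single d 1 : circuitsOf G →₀ ℕ) c₀ = 0 := by
    simp [others, Finsupp.single_apply]
  have := DFunLike.congr_fun hmult c₀
  rw [hc₀, Finsupp.add_apply, Finsupp.single_eq_same] at this
  omega

end Circulations

end

/-- The set of circuits of `G` is linearly independent iff
every circuit has an edge belonging to no other circuit. -/
theorem circuits_linearIndependent_iff_private_edges {V : Type} [Fintype V]
    (G : DirGraph V) :
    LinearIndependent ℝ (fun c : circuitsOf G => circVec (c : Set (V × V))) ↔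
      ∀ c ∈ circuitsOf G, ∃ e ∈ c, ∀ c' ∈ circuitsOf G, c' ≠ c → e ∉ c' := by
  refine ⟨fun hli c hc => exists_private_edge_of_linearIndependent hli.nat_indicator hc,
    fun hpriv => linearIndependent_indicator_of_exists_private (fun c : circuitsOf G => c.1) ?_⟩
  intro c
  obtain ⟨e, he, hpriv⟩ := hpriv c c.2
  exact ⟨e, he, fun d hd => hpriv d d.2 fun h => hd (Subtype.ext h)⟩
end
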